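/- arXiv:2506.14242 — 5 statements merged into one kernel-verified Lean document; each statement's English description precedes it below -/
import Mathlib

section
/- Let f : ℝ^m → [0,∞) be a probability density such that ∫ f(x)^q dx < ∞ for all q in some neighborhood of 1 and the Shannon differential entropy H(f) = −∫ f(x) log f(x) dx is finite. Then the Tsallis entropy converges to the Shannon entropy as q → 1: lim_{q→1} H_q(f) = H(f). -/
/-!
The map `q ↦ ∫ f ^ q` equals `1` at `q = 1`, so the Tsallis entropy is minus its difference
quotient at `1`, and the claim is that its derivative there is `∫ f log f`. Differentiation under
the integral sign is justified by `|log t| ≤ (t ^ a + t ^ (-a)) / a`, which dominates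
`∂_q f ^ q = f ^ q log f` near `q = 1` by a multiple of `f ^ (1 - δ) + f ^ (1 + δ)`, integrable by
hypothesis.
-/

open MeasureTheory Filter Topology Real

lemma norm_rpow_mul_log_le {t q a : ℝ} (ht : 0 ≤ t) (ha : 0 < a) :
    ‖t ^ q * log t‖ ≤ (t ^ (q + a) + t ^ (q - a)) / a := by
  rcases ht.eq_or_lt with rfl | ht
  · simp only [log_zero, mul_zero, norm_zero]
    positivity
  have hlog_le : log t ≤ t ^ a / a := log_le_rpow_div ht.le ha
  have hneg_log_le : -log t ≤ t ^ (-a) / a := by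
    have := log_le_rpow_div (inv_nonneg.2 ht.le) ha
    rwa [log_inv, inv_rpow ht.le, ← rpow_neg ht.le] at this
  have habs_log : |log t| ≤ (t ^ a + t ^ (-a)) / a := by
    rw [abs_le, add_div]
    constructor <;>
      linarith [div_nonneg (rpow_nonneg ht.le a) ha.le, div_nonneg (rpow_nonneg ht.le (-a)) ha.le]
  calc ‖t ^ q * log t‖ = t ^ q * |log t| := by
        rw [norm_mul, norm_of_nonneg (rpow_nonneg ht.le q), norm_eq_abs]
    _ ≤ t ^ q * ((t ^ a + t ^ (-a)) / a) := by gcongr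
    _ = (t ^ (q + a) + t ^ (q - a)) / a := by
        rw [rpow_add ht, sub_eq_add_neg, rpow_add ht]
        ring

lemma rpow_le_rpow_add_rpow_of_mem_Icc {t s lo hi : ℝ} (ht : 0 ≤ t) (hlo : 0 < lo)
    (hs : s ∈ Set.Icc lo hi) : t ^ s ≤ t ^ lo + t ^ hi := by
  rcases ht.eq_or_lt with rfl | ht
  · rw [zero_rpow (hlo.trans_le hs.1).ne', zero_rpow hlo.ne', zero_rpow (hlo.trans_le
      (hs.1.trans hs.2)).ne', add_zero]
  rcases le_total 1 t with h | h
  · linarith [rpow_le_rpow_of_exponent_le h hs.2, rpow_nonneg ht.le lo]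
  · linarith [rpow_le_rpow_of_exponent_ge ht h hs.1, rpow_nonneg ht.le hi]

lemma norm_rpow_mul_log_le_of_abs_sub_lt {t p q δ : ℝ} (ht : 0 ≤ t) (hδ : 0 < δ) (hδp : δ < p)
    (hq : |q - p| < δ / 2) : ‖t ^ q * log t‖ ≤ 4 / δ * (t ^ (p - δ) + t ^ (p + δ)) := by
  obtain ⟨hq_lo, hq_hi⟩ := abs_lt.1 hq
  have hmem : ∀ s ∈ Set.Icc (q - δ / 2) (q + δ / 2), s ∈ Set.Icc (p - δ) (p + δ) :=
    fun s hs => ⟨by linarith [hs.1], by linarith [hs.2]⟩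
  calc ‖t ^ q * log t‖ ≤ (t ^ (q + δ / 2) + t ^ (q - δ / 2)) / (δ / 2) :=
        norm_rpow_mul_log_le ht (half_pos hδ)
    _ ≤ 2 * (t ^ (p - δ) + t ^ (p + δ)) / (δ / 2) := by
        gcongr
        linarith [rpow_le_rpow_add_rpow_of_mem_Icc ht (sub_pos.2 hδp)
            (hmem _ ⟨by linarith, le_rfl⟩),
          rpow_le_rpow_add_rpow_of_mem_Icc ht (sub_pos.2 hδp) (hmem _ ⟨le_rfl, by linarith⟩)]
    _ = 4 / δ * (t ^ (p - δ) + t ^ (p + δ)) := by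
        field_simp
        ring

lemma hasDerivAt_const_rpow_of_nonneg {t q : ℝ} (ht : 0 ≤ t) (hq : 0 < q) :
    HasDerivAt (fun r => t ^ r) (t ^ q * log t) q := by
  rcases ht.eq_or_lt with rfl | ht
  · rw [log_zero, mul_zero]
    refine (hasDerivAt_const q (0 : ℝ)).congr_of_eventuallyEq ?_
    filter_upwards [eventually_gt_nhds hq] with r hr
    exact zero_rpow hr.ne'
  · exact (hasStrictDerivAt_const_rpow ht q).hasDerivAt

theorem hasDerivAt_integral_rpow {α : Type*} [MeasurableSpace α] {μ : Measure α} {f : α → ℝ}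
    (hf0 : ∀ x, 0 ≤ f x) (hfm : AEMeasurable f μ) {p δ : ℝ} (hδ : 0 < δ) (hδp : δ < p)
    (hlo : Integrable (fun x => f x ^ (p - δ)) μ) (hhi : Integrable (fun x => f x ^ (p + δ)) μ) :
    HasDerivAt (fun q => ∫ x, f x ^ q ∂μ) (∫ x, f x ^ p * log (f x) ∂μ) p := by
  have hp_int : Integrable (fun x => f x ^ p) μ := by
    refine (hlo.add hhi).mono' (hfm.pow_const p).aestronglyMeasurable (ae_of_all _ fun x => ?_)
    rw [norm_of_nonneg (rpow_nonneg (hf0 x) p)]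
    exact rpow_le_rpow_add_rpow_of_mem_Icc (hf0 x) (sub_pos.2 hδp)
      ⟨by linarith, by linarith⟩
  refine (hasDerivAt_integral_of_dominated_loc_of_deriv_le
    (F' := fun q x => f x ^ q * log (f x))
    (bound := fun x => 4 / δ * (f x ^ (p - δ) + f x ^ (p + δ)))
    (Metric.ball_mem_nhds p (half_pos hδ))
    (Eventually.of_forall fun q => (hfm.pow_const q).aestronglyMeasurable) hp_int
    ((hfm.pow_const p).mul (measurable_log.comp_aemeasurable hfm)).aestronglyMeasurable
    (ae_of_all _ fun x q hq => ?_) ((hlo.add hhi).const_mul _)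
    (ae_of_all _ fun x q hq => ?_)).2
  · exact norm_rpow_mul_log_le_of_abs_sub_lt (hf0 x) hδ hδp hq
  · have hq' := abs_lt.1 (Metric.mem_ball.1 hq)
    exact hasDerivAt_const_rpow_of_nonneg (hf0 x) (by linarith)

theorem tsallis_tendsto_shannon_general (m : ℕ)
    (f : (Fin m → ℝ) → ℝ)
    (hf0 : ∀ x, 0 ≤ f x) (hfmeas : Measurable f) (hf1 : ∫ x, f x = 1)
    (hnbhd : ∃ ε > (0 : ℝ), ∀ q : ℝ, |q - 1| < ε → Integrable (fun x => f x ^ q)) :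
    Tendsto (fun q : ℝ => (1 / (1 - q)) * ((∫ x, f x ^ q) - 1))
      (𝓝[≠] (1 : ℝ)) (𝓝 (-∫ x, f x * Real.log (f x))) := by
  obtain ⟨ε, hε, hint⟩ := hnbhd
  obtain ⟨δ, hδ, hδ_lt⟩ := exists_between (lt_min hε one_pos)
  obtain ⟨hδε, hδ1⟩ := lt_min_iff.1 hδ_lt
  have hder : HasDerivAt (fun q : ℝ => ∫ x, f x ^ q) (∫ x, f x * log (f x)) 1 := by
    simpa only [rpow_one] using hasDerivAt_integral_rpow hf0 hfmeas.aemeasurable hδ hδ1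
      (hint _ (by rwa [sub_sub_cancel_left, abs_neg, abs_of_pos hδ]))
      (hint _ (by rwa [add_sub_cancel_left, abs_of_pos hδ]))
  refine (hasDerivAt_iff_tendsto_slope.1 hder).neg.congr fun q => ?_
  simp only [slope_def_field, rpow_one]
  rw [hf1, ← neg_sub q 1, one_div, inv_neg]
  ring

/-- **Tsallis entropy converges to Shannon entropy as `q → 1`.**
If `f` is a probability density on `ℝ^m` with `∫ f^q < ∞` for all `q` in a neighborhood
of `1` and finite Shannon differential entropy `H(f) = -∫ f log f`, then
`H_q(f) = (1/(1-q))(∫ f^q - 1) → H(f)` as `q → 1`. -/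
theorem tsallis_tendsto_shannon (m : ℕ)
    (f : (Fin m → ℝ) → ℝ)
    (hf0 : ∀ x, 0 ≤ f x) (hfmeas : Measurable f) (hf1 : ∫ x, f x = 1)
    (hnbhd : ∃ ε > (0 : ℝ), ∀ q : ℝ, |q - 1| < ε → Integrable (fun x => f x ^ q))
    (hent : Integrable (fun x => f x * Real.log (f x))) :
    Tendsto (fun q : ℝ => (1 / (1 - q)) * ((∫ x, f x ^ q) - 1))
      (𝓝[≠] (1 : ℝ)) (𝓝 (-∫ x, f x * Real.log (f x))) :=
  tsallis_tendsto_shannon_general m f hf0 hfmeas hf1 hnbhd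
end

section
/- Let f : ℝ^m → [0,∞) be a probability density with support S = {x ∈ ℝ^m : f(x) > 0}, and suppose the Lebesgue measure of S is infinite. Then the Tsallis entropy diverges as q tends to 0 from above: lim_{q→0⁺} H_q(f) = +∞. -/
/-!
On the support `S`, `f ^ q → 1` pointwise as `q → 0⁺`, so `∫_S f ^ q` should tend to
`vol S = ∞`. Quantitatively: the superlevel sets `{f > ε}` exhaust `S`, so for any `c` one of
them has measure `> c`, and there `f ^ q ≥ ε ^ q → 1`. Since the prefactor `1 / (1 - q)` tends
to `1`, the Tsallis entropy tends to `+∞`.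
-/

open MeasureTheory Filter Topology ENNReal

section

variable {α : Type*} [MeasurableSpace α] (μ : Measure α)

theorem tendsto_measure_setOf_one_div_lt (f : α → ℝ) :
    Tendsto (fun n : ℕ => μ {x | 1 / (n + 1 : ℝ) < f x}) atTop (𝓝 (μ {x | 0 < f x})) := by
  have hmono : Monotone fun n : ℕ => {x | 1 / (n + 1 : ℝ) < f x} := fun _ _ hab =>
    Set.ofPred_subset_ofPred.2 fun _ => (Nat.one_div_le_one_div hab).trans_lt
  have hunion : ⋃ n : ℕ, {x | 1 / (n + 1 : ℝ) < f x} = {x | 0 < f x} := by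
    ext x
    simp only [Set.mem_iUnion, Set.mem_ofPred_eq]
    exact ⟨fun ⟨_, hn⟩ => Nat.one_div_pos_of_nat.trans hn, exists_nat_one_div_lt⟩
  rw [← hunion]
  exact tendsto_measure_iUnion_atTop hmono

theorem ofReal_rpow_mul_measure_le_setLIntegral {f : α → ℝ} (hf : Measurable f) {ε q : ℝ}
    (hε : 0 ≤ ε) (hq : 0 ≤ q) :
    ENNReal.ofReal ε ^ q * μ {x | ε < f x} ≤
      ∫⁻ x in {x | 0 < f x}, ENNReal.ofReal (f x) ^ q ∂μ := calc
  _ = ∫⁻ _ in {x | ε < f x}, ENNReal.ofReal ε ^ q ∂μ := (setLIntegral_const _ _).symm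
  _ ≤ ∫⁻ x in {x | ε < f x}, ENNReal.ofReal (f x) ^ q ∂μ :=
      setLIntegral_mono' (measurableSet_lt measurable_const hf) fun _ hx =>
        ENNReal.rpow_le_rpow (ENNReal.ofReal_le_ofReal (le_of_lt hx)) hq
  _ ≤ _ := lintegral_mono_set fun _ hx => hε.trans_lt hx

theorem tendsto_setLIntegral_rpow_nhdsGT_zero_of_measure_eq_top {f : α → ℝ} (hf : Measurable f)
    (hS : μ {x | 0 < f x} = ⊤) :
    Tendsto (fun q : ℝ => ∫⁻ x in {x | 0 < f x}, ENNReal.ofReal (f x) ^ q ∂μ)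
      (𝓝[>] 0) (𝓝 ⊤) := by
  refine ENNReal.tendsto_nhds_top_iff_nnreal.2 fun c => ?_
  obtain ⟨n, hn⟩ := ((tendsto_measure_setOf_one_div_lt μ f).eventually
    (lt_mem_nhds (hS ▸ coe_lt_top (r := c)))).exists
  set ε : ℝ := 1 / (n + 1 : ℝ)
  have hε : 0 < ε := Nat.one_div_pos_of_nat
  have hpow : Tendsto (fun q : ℝ => ENNReal.ofReal ε ^ q) (𝓝[>] 0) (𝓝 1) := by
    have := (Real.continuousAt_const_rpow (b := 0) hε.ne').tendsto.mono_left
      (nhdsWithin_le_nhds (s := Set.Ioi 0))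
    simpa [ENNReal.ofReal_rpow_of_pos hε] using ENNReal.tendsto_ofReal this
  have hlim : Tendsto (fun q : ℝ => ENNReal.ofReal ε ^ q * μ {x | ε < f x}) (𝓝[>] 0)
      (𝓝 (μ {x | ε < f x})) := by
    simpa using ENNReal.Tendsto.mul_const hpow (Or.inl one_ne_zero)
  filter_upwards [hlim.eventually (lt_mem_nhds hn), self_mem_nhdsWithin] with q hq hq0
  exact hq.trans_le (ofReal_rpow_mul_measure_le_setLIntegral μ hf hε.le (le_of_lt hq0))

end

theorem EReal.tendsto_sub_coe_nhds_top {β : Type*} {l : Filter β} {g : β → EReal}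
    (hg : Tendsto g l (𝓝 ⊤)) (c : ℝ) : Tendsto (fun b => g b - c) l (𝓝 ⊤) := by
  have := (EReal.continuousAt_add_top_coe (-c)).tendsto.comp (hg.prodMk_nhds tendsto_const_nhds)
  simp only [Function.comp_def, EReal.top_add_coe] at this
  simpa [sub_eq_add_neg] using this

theorem tsallis_tendsto_top_of_infinite_support_general (m : ℕ)
    (f : (Fin m → ℝ) → ℝ)
    (hfmeas : Measurable f)
    (hS : volume {x : Fin m → ℝ | 0 < f x} = ⊤) :
    Tendsto (fun q : ℝ =>
        ((1 / (1 - q) : ℝ) : EReal) *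
          (((∫⁻ x in {x : Fin m → ℝ | 0 < f x}, ENNReal.ofReal (f x) ^ q : ℝ≥0∞) : EReal) - 1))
      (𝓝[>] (0 : ℝ)) (𝓝 (⊤ : EReal)) := by
  have hcoeff : Tendsto (fun q : ℝ => ((1 / (1 - q) : ℝ) : EReal)) (𝓝[>] 0) (𝓝 1) := by
    have : Tendsto (fun q : ℝ => 1 / (1 - q)) (𝓝 0) (𝓝 (1 / (1 - 0))) :=
      tendsto_const_nhds.div (tendsto_const_nhds.sub tendsto_id) (by norm_num)
    simpa [Function.comp_def] using
      (continuous_coe_real_ereal.tendsto _).comp (this.mono_left nhdsWithin_le_nhds)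
  have hintegral := (continuous_coe_ennreal_ereal.tendsto ⊤).comp
    (tendsto_setLIntegral_rpow_nhdsGT_zero_of_measure_eq_top volume hfmeas hS)
  simpa using EReal.Tendsto.mul hcoeff (EReal.tendsto_sub_coe_nhds_top hintegral 1)
    (by simp) (by simp) (by simp) (by simp)

/-- **Divergence of Tsallis entropy as `q → 0⁺` for infinite-measure support.**
If `f` is a probability density on `ℝ^m` whose support `S = {x : f x > 0}` has infinite
Lebesgue measure, then the (extended-real valued) Tsallis entropy
`H_q(f) = (1/(1-q))(∫_S f^q - 1)` diverges to `+∞` as `q → 0⁺`. -/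
theorem tsallis_tendsto_top_of_infinite_support (m : ℕ)
    (f : (Fin m → ℝ) → ℝ)
    (hf0 : ∀ x, 0 ≤ f x) (hfmeas : Measurable f) (hf1 : ∫ x, f x = 1)
    (hS : volume {x : Fin m → ℝ | 0 < f x} = ⊤) :
    Tendsto (fun q : ℝ =>
        ((1 / (1 - q) : ℝ) : EReal) *
          (((∫⁻ x in {x : Fin m → ℝ | 0 < f x}, ENNReal.ofReal (f x) ^ q : ℝ≥0∞) : EReal) - 1))
      (𝓝[>] (0 : ℝ)) (𝓝 (⊤ : EReal)) :=
  tsallis_tendsto_top_of_infinite_support_general m f hfmeas hS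
end

section
/- Let f : ℝ^m → [0,∞) be a probability density and q₀ ∈ (0,1) ∪ (1,∞). If there is an open interval around q₀ on which ∫ f(x)^q dx is finite for every q, then the map q ↦ H_q(f) is continuous at q₀. -/
open MeasureTheory Topology

/-!
Near `q₀ ≠ 0` every exponent `q` lies between `a = q₀ - δ` and `b = q₀ + δ`, and for `t ≥ 0` one
has `t ^ q ≤ t ^ a + t ^ b` (the first term wins for `t ≤ 1`, the second for `t ≥ 1`). Since
`f ^ a` and `f ^ b` are integrable, dominated convergence makes `q ↦ ∫ f ^ q` continuous at `q₀`.
-/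

lemma Real.rpow_le_rpow_add_rpow {t a q b : ℝ} (ht : 0 ≤ t) (haq : a ≤ q) (hqb : q ≤ b)
    (hq : q ≠ 0) : t ^ q ≤ t ^ a + t ^ b := by
  obtain rfl | ht₀ := ht.eq_or_lt
  · rw [Real.zero_rpow hq]
    positivity
  obtain ht1 | ht1 := le_total t 1
  · calc t ^ q ≤ t ^ a := Real.rpow_le_rpow_of_exponent_ge ht₀ ht1 haq
      _ ≤ t ^ a + t ^ b := le_add_of_nonneg_right (Real.rpow_nonneg ht _)
  · calc t ^ q ≤ t ^ b := Real.rpow_le_rpow_of_exponent_le ht1 hqb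
      _ ≤ t ^ a + t ^ b := le_add_of_nonneg_left (Real.rpow_nonneg ht _)

theorem continuousAt_integral_rpow {α : Type*} [MeasurableSpace α] {μ : Measure α} {f : α → ℝ}
    (hf : 0 ≤ᵐ[μ] f) {q₀ : ℝ} (hq₀ : q₀ ≠ 0)
    (hint : ∀ᶠ q in 𝓝 q₀, Integrable (fun x => f x ^ q) μ) :
    ContinuousAt (fun q => ∫ x, f x ^ q ∂μ) q₀ := by
  obtain ⟨ε, hε, hball⟩ := Metric.eventually_nhds_iff_ball.1 hint
  obtain ⟨δ, hδ, hδε, hδq₀⟩ : ∃ δ, 0 < δ ∧ δ < ε ∧ δ < |q₀| := by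
    obtain ⟨δ, hδ, hδmin⟩ := exists_between (lt_min hε (abs_pos.2 hq₀))
    exact ⟨δ, hδ, lt_min_iff.1 hδmin⟩
  have hmem {q : ℝ} (hq : |q - q₀| < ε) : q ∈ Metric.ball q₀ ε := by rwa [Metric.mem_ball, Real.dist_eq]
  have hlow := hball _ (hmem (q := q₀ - δ) (by rw [abs_of_neg] <;> linarith))
  have hhigh := hball _ (hmem (q := q₀ + δ) (by rw [abs_of_pos] <;> linarith))
  refine continuousAt_of_dominated (bound := fun x => f x ^ (q₀ - δ) + f x ^ (q₀ + δ))
    (hint.mono fun q hq => hq.aestronglyMeasurable) ?_ (hlow.add hhigh)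
    (ae_of_all _ fun x => Real.continuousAt_const_rpow' hq₀)
  filter_upwards [Metric.ball_mem_nhds q₀ hδ] with q hq
  rw [Metric.mem_ball, Real.dist_eq, abs_lt] at hq
  have hq0 : q ≠ 0 := by
    rintro rfl
    cases abs_cases q₀ <;> linarith
  filter_upwards [hf] with x hx
  rw [Real.norm_of_nonneg (Real.rpow_nonneg hx _)]
  exact Real.rpow_le_rpow_add_rpow hx (by linarith) (by linarith) hq0

theorem tsallis_continuousAt_general (m : ℕ)
    (f : (Fin m → ℝ) → ℝ)
    (hf0 : ∀ x, 0 ≤ f x)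
    (q₀ : ℝ) (hq₀pos : 0 < q₀) (hq₀ : q₀ ≠ 1)
    (hnbhd : ∃ ε > (0 : ℝ), ∀ q : ℝ, |q - q₀| < ε → Integrable (fun x => f x ^ q)) :
    ContinuousAt (fun q : ℝ => (1 / (1 - q)) * ((∫ x, f x ^ q) - 1)) q₀ := by
  obtain ⟨ε, hε, hint⟩ := hnbhd
  have hint_nhds : ∀ᶠ q in 𝓝 q₀, Integrable (fun x => f x ^ q) :=
    Metric.eventually_nhds_iff_ball.2 ⟨ε, hε, fun q hq => hint q (by rwa [← Real.dist_eq])⟩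
  have hfactor : ContinuousAt (fun q : ℝ => 1 / (1 - q)) q₀ :=
    continuousAt_const.div (continuousAt_const.sub continuousAt_id) (sub_ne_zero.2 hq₀.symm)
  exact hfactor.mul
    ((continuousAt_integral_rpow (ae_of_all _ hf0) hq₀pos.ne' hint_nhds).sub continuousAt_const)

/-- **Continuity of the Tsallis entropy in the order `q`.**
If `f` is a probability density on `ℝ^m`, `q₀ ∈ (0,1) ∪ (1,∞)`, and `∫ f^q < ∞` for
every `q` in an open interval around `q₀`, then `q ↦ H_q(f) = (1/(1-q))(∫ f^q - 1)`
is continuous at `q₀`. -/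
theorem tsallis_continuousAt (m : ℕ)
    (f : (Fin m → ℝ) → ℝ)
    (hf0 : ∀ x, 0 ≤ f x) (hfmeas : Measurable f) (hf1 : ∫ x, f x = 1)
    (q₀ : ℝ) (hq₀pos : 0 < q₀) (hq₀ : q₀ ≠ 1)
    (hnbhd : ∃ ε > (0 : ℝ), ∀ q : ℝ, |q - q₀| < ε → Integrable (fun x => f x ^ q)) :
    ContinuousAt (fun q : ℝ => (1 / (1 - q)) * ((∫ x, f x ^ q) - 1)) q₀ :=
  tsallis_continuousAt_general m f hf0 q₀ hq₀pos hq₀ hnbhd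
end

section
/- For every integer m ≥ 1, shape parameter s > 0, μ ∈ ℝ^m, and symmetric positive definite Σ ∈ ℝ^{m×m}, the normalization constant of the multivariate generalized Gaussian density has the closed form C(m, s, Σ) = ∫_{ℝ^m} exp(−(1/2)[(x−μ)^T Σ^{−1} (x−μ)]^s) dx = √(det Σ) · π^{m/2} · 2^{m/(2s)} · Γ(m/(2s) + 1) / Γ(m/2 + 1). -/
/-!
Translate to `μ = 0`, then substitute `x = Σ^{1/2} y`: the quadratic form becomes `‖y‖²` and the
Jacobian is `√(det Σ)`. What remains is the radial integral `∫ exp(-(1/2)‖y‖^{2s}) dy`; rescaling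
`y` by `2^{-1/(2s)}` turns it into `∫ exp(-‖y‖^{2s}) dy`, which equals
`vol(B(0,1)) · Γ(m/(2s) + 1)` with `vol(B(0,1)) = π^{m/2} / Γ(m/2 + 1)`.
-/

open MeasureTheory Module Matrix

section AddHaar

variable {E : Type*} [NormedAddCommGroup E] [NormedSpace ℝ E] [MeasurableSpace E] [BorelSpace E]
  [FiniteDimensional ℝ E] (μ : Measure E) [μ.IsAddHaarMeasure] {F : Type*} [NormedAddCommGroup F]
  [NormedSpace ℝ F]

theorem integral_comp_linearMap {f : E →ₗ[ℝ] E} (hf : LinearMap.det f ≠ 0) (g : E → F) :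
    ∫ x, g (f x) ∂μ = |LinearMap.det f|⁻¹ • ∫ x, g x ∂μ := by
  let e : E ≃L[ℝ] E := (LinearEquiv.ofIsUnitDet (f := f) (v := finBasis ℝ E) (v' := finBasis ℝ E)
    (by rwa [LinearMap.det_toMatrix, isUnit_iff_ne_zero])).toContinuousLinearEquiv
  calc ∫ x, g (f x) ∂μ = ∫ x, g x ∂(μ.map e.toHomeomorph.toMeasurableEquiv) :=
        (integral_map_equiv e.toHomeomorph.toMeasurableEquiv g).symm
    _ = |LinearMap.det f|⁻¹ • ∫ x, g x ∂μ := by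
      rw [show ⇑e.toHomeomorph.toMeasurableEquiv = f from rfl,
        Measure.map_linearMap_addHaar_eq_smul_addHaar μ hf, integral_smul_measure,
        ENNReal.toReal_ofReal (abs_nonneg _), abs_inv]

theorem integral_comp_const_mul_norm_rpow (f : ℝ → F) {p c : ℝ} (hp : 0 < p) (hc : 0 < c) :
    ∫ x, f (c * ‖x‖ ^ p) ∂μ = c ^ (-(finrank ℝ E : ℝ) / p) • ∫ x, f (‖x‖ ^ p) ∂μ := by
  have hcp : 0 < c ^ p⁻¹ := Real.rpow_pos_of_pos hc _
  have hscale : ∀ x : E, c * ‖x‖ ^ p = ‖c ^ p⁻¹ • x‖ ^ p := fun x => by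
    rw [norm_smul, Real.norm_of_nonneg hcp.le, Real.mul_rpow hcp.le (norm_nonneg x),
      ← Real.rpow_mul hc.le, inv_mul_cancel₀ hp.ne', Real.rpow_one]
  simp_rw [hscale]
  rw [Measure.integral_comp_smul μ (fun y => f (‖y‖ ^ p)), ← Real.rpow_natCast,
    ← Real.rpow_mul hc.le, abs_of_nonneg (by positivity), ← Real.rpow_neg hc.le]
  congr 2
  ring

end AddHaar

section InnerProductSpace

variable {E : Type*} [NormedAddCommGroup E] [InnerProductSpace ℝ E] [FiniteDimensional ℝ E]
  [MeasurableSpace E] [BorelSpace E]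

theorem volume_unitBall :
    volume (Metric.ball (0 : E) 1) =
      .ofReal (√Real.pi ^ finrank ℝ E / Real.Gamma (finrank ℝ E / 2 + 1)) := by
  obtain hE | hE := subsingleton_or_nontrivial E
  · have hball : Metric.ball (0 : E) 1 = Set.univ :=
      Subsingleton.eq_univ_of_nonempty ⟨0, Metric.mem_ball_self one_pos⟩
    have hpar : parallelepiped (stdOrthonormalBasis ℝ E) = Set.univ :=
      Subsingleton.eq_univ_of_nonempty ((Set.nonempty_Icc.2 zero_le_one).image _)
    simp [hball, ← hpar, (stdOrthonormalBasis ℝ E).volume_parallelepiped,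
      finrank_zero_of_subsingleton]
  · simpa using InnerProductSpace.volume_ball (0 : E) 1

theorem integral_exp_neg_norm_rpow {p : ℝ} (hp : 0 < p) :
    ∫ x : E, Real.exp (-‖x‖ ^ p) =
      √Real.pi ^ finrank ℝ E * Real.Gamma (finrank ℝ E / p + 1) /
        Real.Gamma (finrank ℝ E / 2 + 1) := by
  have hΓ : 0 < Real.Gamma (finrank ℝ E / p + 1) := Real.Gamma_pos_of_pos (by positivity)
  have h := measure_unitBall_eq_integral_div_gamma (volume : Measure E) hp
  rw [volume_unitBall, ENNReal.ofReal_eq_ofReal_iff (by positivity)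
    (div_nonneg (integral_nonneg fun _ => (Real.exp_pos _).le) hΓ.le),
    div_eq_div_iff (Real.Gamma_pos_of_pos (by positivity)).ne' hΓ.ne'] at h
  rw [eq_div_iff (Real.Gamma_pos_of_pos (by positivity)).ne', h]

end InnerProductSpace

section QuadraticForm

variable {n : Type*} [Fintype n] {F : Type*} [NormedAddCommGroup F] [NormedSpace ℝ F]

open scoped MatrixOrder in
theorem integral_comp_dotProduct_inv_mulVec [DecidableEq n] {S : Matrix n n ℝ} (hS : S.PosDef)
    (f : ℝ → F) :
    ∫ x : n → ℝ, f (x ⬝ᵥ (S⁻¹ *ᵥ x)) = √S.det • ∫ x : n → ℝ, f (x ⬝ᵥ x) := by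
  have hSinv : S⁻¹.PosSemidef := hS.inv.posSemidef
  set B := CFC.sqrt S⁻¹
  have hB : B.PosSemidef := (CFC.sqrt_nonneg _).posSemidef
  have hBB : B * B = S⁻¹ := CFC.sqrt_mul_sqrt_self _ hSinv.nonneg
  have hquad : ∀ x : n → ℝ, x ⬝ᵥ (S⁻¹ *ᵥ x) = B *ᵥ x ⬝ᵥ B *ᵥ x := fun x => by
    rw [← hBB, ← mulVec_mulVec, dotProduct_mulVec, ← mulVec_transpose,
      ← conjTranspose_eq_transpose_of_trivial, hB.isHermitian]
  have hdet : B.det = (√S.det)⁻¹ := by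
    rw [hSinv.det_sqrt, RCLike.sqrt_of_nonneg hSinv.det_nonneg, det_nonsing_inv,
      Ring.inverse_eq_inv', ← Real.sqrt_inv]
    rfl
  have hdet_ne : LinearMap.det (toLin' B) ≠ 0 := by
    rw [LinearMap.det_toLin', hdet]
    exact inv_ne_zero (Real.sqrt_pos.2 hS.det_pos).ne'
  have hchange := integral_comp_linearMap volume hdet_ne fun y => f (y ⬝ᵥ y)
  rw [LinearMap.det_toLin', hdet, abs_inv, abs_of_nonneg (Real.sqrt_nonneg _), inv_inv] at hchange
  simp only [toLin'_apply] at hchange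
  simp_rw [hquad, hchange]

theorem integral_comp_dotProduct_self (f : ℝ → F) :
    ∫ x : n → ℝ, f (x ⬝ᵥ x) = ∫ y : EuclideanSpace ℝ n, f (‖y‖ ^ 2) := by
  rw [← (EuclideanSpace.volume_preserving_symm_measurableEquiv_toLp n).integral_comp
    (MeasurableEquiv.toLp 2 (n → ℝ)).symm.measurableEmbedding]
  congr! 2 with y
  rw [EuclideanSpace.norm_sq_eq]
  simp [dotProduct, sq]

end QuadraticForm

theorem generalizedGaussian_normalization_general (m : ℕ) (s : ℝ) (hs : 0 < s)
    (μ : Fin m → ℝ) (S : Matrix (Fin m) (Fin m) ℝ)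
    (hpd : S.PosDef) :
    ∫ x : Fin m → ℝ, Real.exp (-(1 / 2) * ((x - μ) ⬝ᵥ (S⁻¹ *ᵥ (x - μ))) ^ s) =
      Real.sqrt S.det * Real.pi ^ ((m : ℝ) / 2) * 2 ^ ((m : ℝ) / (2 * s)) *
        Real.Gamma ((m : ℝ) / (2 * s) + 1) / Real.Gamma ((m : ℝ) / 2 + 1) := by
  have hnorm : ∀ y : EuclideanSpace ℝ (Fin m), (‖y‖ ^ 2) ^ s = ‖y‖ ^ (2 * s) := fun y => by
    rw [← Real.rpow_natCast, ← Real.rpow_mul (norm_nonneg y), Nat.cast_ofNat]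
  have htwo : (1 / 2 : ℝ) ^ (-(m : ℝ) / (2 * s)) = 2 ^ ((m : ℝ) / (2 * s)) := by
    rw [one_div, Real.inv_rpow zero_le_two, ← Real.rpow_neg zero_le_two, neg_div, neg_neg]
  have hpi : √Real.pi ^ m = Real.pi ^ ((m : ℝ) / 2) := by
    rw [Real.sqrt_eq_rpow, ← Real.rpow_natCast, ← Real.rpow_mul Real.pi_pos.le, one_div_mul_eq_div]
  set g : ℝ → ℝ := fun t => Real.exp (-(1 / 2) * t ^ s)
  rw [integral_sub_right_eq_self (fun x => g (x ⬝ᵥ (S⁻¹ *ᵥ x))) μ,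
    integral_comp_dotProduct_inv_mulVec hpd g, integral_comp_dotProduct_self g]
  simp_rw [g, hnorm, neg_mul]
  rw [integral_comp_const_mul_norm_rpow volume (fun t => Real.exp (-t)) (by positivity)
      one_half_pos, integral_exp_neg_norm_rpow (by positivity), finrank_euclideanSpace_fin,
    htwo, hpi, smul_eq_mul, smul_eq_mul]
  ring

/-- **Closed form of the generalized Gaussian normalization constant.**
For `s > 0`, `μ ∈ ℝ^m` and `Σ` symmetric positive definite,
`C(m,s,Σ) = ∫ exp(-(1/2)[(x-μ)^T Σ⁻¹ (x-μ)]^s) dx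
          = √(det Σ) π^{m/2} 2^{m/(2s)} Γ(m/(2s)+1) / Γ(m/2+1)`. -/
theorem generalizedGaussian_normalization (m : ℕ) (hm : 1 ≤ m) (s : ℝ) (hs : 0 < s)
    (μ : Fin m → ℝ) (S : Matrix (Fin m) (Fin m) ℝ)
    (hsymm : S.IsSymm) (hpd : S.PosDef) :
    ∫ x : Fin m → ℝ, Real.exp (-(1 / 2) * ((x - μ) ⬝ᵥ (S⁻¹ *ᵥ (x - μ))) ^ s) =
      Real.sqrt S.det * Real.pi ^ ((m : ℝ) / 2) * 2 ^ ((m : ℝ) / (2 * s)) *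
        Real.Gamma ((m : ℝ) / (2 * s) + 1) / Real.Gamma ((m : ℝ) / 2 + 1) :=
  generalizedGaussian_normalization_general m s hs μ S hpd
end

section
/- Let f^{GG} be the multivariate generalized Gaussian density on ℝ^m with parameters s > 0, μ ∈ ℝ^m, and symmetric positive definite Σ, and let q > 0, q ≠ 1. Then ∫_{ℝ^m} [f^{GG}(x)]^q dx = q^{−m/(2s)} C(m,s,Σ)^{1−q}, and consequently the Tsallis entropy of f^{GG} is H_q(f^{GG}) = (1/(1−q)) ( q^{−m/(2s)} C(m,s,Σ)^{1−q} − 1 ). -/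
open MeasureTheory Matrix Module

/-! Raising the density to the power `q` multiplies the exponent `h^s` by `q`, and `q • h^s` is
`h^s` evaluated at the rescaled point `q^{1/(2s)} • (x - μ)`, since `h^s` is positively
homogeneous of degree `2s`. The change of variables costs the Jacobian `q^{-m/(2s)}`, so
`∫ (f^{GG})^q = C^{-q} · q^{-m/(2s)} C`. -/

theorem integral_comp_mul_of_isHomogeneous {E F : Type*} [NormedAddCommGroup E]
    [NormedSpace ℝ E] [MeasurableSpace E] [BorelSpace E] [FiniteDimensional ℝ E]
    [NormedAddCommGroup F] [NormedSpace ℝ F] (ν : Measure E) [ν.IsAddHaarMeasure]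
    {ψ : E → ℝ} {p : ℝ} (hp : p ≠ 0) (hψ : ∀ c : ℝ, 0 < c → ∀ y, ψ (c • y) = c ^ p * ψ y)
    (g : ℝ → F) {q : ℝ} (hq : 0 < q) (a : E) :
    ∫ x, g (q * ψ (x - a)) ∂ν = q ^ (-(finrank ℝ E : ℝ) / p) • ∫ x, g (ψ (x - a)) ∂ν := by
  set c := q ^ p⁻¹
  have hc : 0 < c := Real.rpow_pos_of_pos hq _
  have hrescale : ∀ y, q * ψ y = ψ (c • y) := fun y => by
    rw [hψ c hc, ← Real.rpow_mul hq.le, inv_mul_cancel₀ hp, Real.rpow_one]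
  have hjacobian : (c ^ finrank ℝ E)⁻¹ = q ^ (-(finrank ℝ E : ℝ) / p) := by
    rw [← Real.rpow_natCast, ← Real.rpow_mul hq.le, ← Real.rpow_neg hq.le]
    ring_nf
  simp_rw [hrescale]
  rw [integral_sub_right_eq_self (fun y => g (ψ (c • y))),
    integral_sub_right_eq_self (fun y => g (ψ y)), Measure.integral_comp_smul_of_nonneg ν (fun y => g (ψ y)) c (hR := hc.le), hjacobian]

theorem Matrix.PosSemidef.dotProduct_mulVec_rpow_smul {m : Type*} [Fintype m]
    {A : Matrix m m ℝ} (hA : A.PosSemidef) (s : ℝ) {c : ℝ} (hc : 0 ≤ c) (y : m → ℝ) :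
    ((c • y) ⬝ᵥ A *ᵥ (c • y)) ^ s = c ^ (2 * s) * (y ⬝ᵥ A *ᵥ y) ^ s := by
  have hquad : (c • y) ⬝ᵥ A *ᵥ (c • y) = c ^ 2 * (y ⬝ᵥ A *ᵥ y) := by
    rw [smul_dotProduct, mulVec_smul, dotProduct_smul, smul_eq_mul, smul_eq_mul]
    ring
  have hnonneg : 0 ≤ y ⬝ᵥ A *ᵥ y := by simpa using hA.dotProduct_mulVec_nonneg y
  rw [hquad, Real.mul_rpow (sq_nonneg c) hnonneg, ← Real.rpow_natCast, ← Real.rpow_mul hc]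
  norm_num

theorem Real.inv_mul_exp_rpow {C : ℝ} (hC : 0 ≤ C) (t q : ℝ) :
    (C⁻¹ * Real.exp t) ^ q = C ^ (-q) * Real.exp (q * t) := by
  rw [Real.mul_rpow (inv_nonneg.mpr hC) (Real.exp_pos t).le, Real.inv_rpow hC,
    ← Real.rpow_neg hC, ← Real.exp_mul, mul_comm t]

theorem tsallis_generalizedGaussian_general (m : ℕ) (s : ℝ) (hs : 0 < s)
    (μ : Fin m → ℝ) (S : Matrix (Fin m) (Fin m) ℝ)
    (hpd : S.PosDef)
    (q : ℝ) (hq0 : 0 < q) (hq1 : q ≠ 1)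
    (C : ℝ)
    (hC : C = ∫ x : Fin m → ℝ, Real.exp (-(1 / 2) * ((x - μ) ⬝ᵥ (S⁻¹ *ᵥ (x - μ))) ^ s)) :
    (∫ x : Fin m → ℝ,
        (C⁻¹ * Real.exp (-(1 / 2) * ((x - μ) ⬝ᵥ (S⁻¹ *ᵥ (x - μ))) ^ s)) ^ q) =
      q ^ (-(m : ℝ) / (2 * s)) * C ^ (1 - q) ∧
    (1 / (1 - q)) *
        ((∫ x : Fin m → ℝ,
          (C⁻¹ * Real.exp (-(1 / 2) * ((x - μ) ⬝ᵥ (S⁻¹ *ᵥ (x - μ))) ^ s)) ^ q) - 1) =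
      (1 / (1 - q)) * (q ^ (-(m : ℝ) / (2 * s)) * C ^ (1 - q) - 1) := by
  have hC0 : 0 ≤ C := hC ▸ integral_nonneg fun x => (Real.exp_pos _).le
  have hscale := integral_comp_mul_of_isHomogeneous volume (p := 2 * s)
    (ψ := fun y => (y ⬝ᵥ S⁻¹ *ᵥ y) ^ s) (by positivity)
    (fun c hc => hpd.inv.posSemidef.dotProduct_mulVec_rpow_smul s hc.le)
    (fun t => Real.exp (-(1 / 2) * t)) hq0 μ
  rw [finrank_fin_fun, ← hC] at hscale
  have hpower : (∫ x : Fin m → ℝ,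
        (C⁻¹ * Real.exp (-(1 / 2) * ((x - μ) ⬝ᵥ (S⁻¹ *ᵥ (x - μ))) ^ s)) ^ q) =
      q ^ (-(m : ℝ) / (2 * s)) * C ^ (1 - q) := by
    calc _ = C ^ (-q) * ∫ x : Fin m → ℝ,
          Real.exp (-(1 / 2) * (q * ((x - μ) ⬝ᵥ (S⁻¹ *ᵥ (x - μ))) ^ s)) := by
          simp_rw [Real.inv_mul_exp_rpow hC0, mul_left_comm q]
          exact integral_const_mul _ _
      _ = q ^ (-(m : ℝ) / (2 * s)) * (C ^ (-q) * C ^ (1 : ℝ)) := by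
          rw [hscale, smul_eq_mul, Real.rpow_one]; ring
      _ = q ^ (-(m : ℝ) / (2 * s)) * C ^ (1 - q) := by
          -- `rpow_add'` needs `1 - q ≠ 0` instead of `C ≠ 0`, which would require integrability
          rw [← Real.rpow_add' hC0 (by rwa [neg_add_eq_sub, sub_ne_zero, ne_comm]), neg_add_eq_sub]
  exact ⟨hpower, by rw [hpower]⟩

/-- **Tsallis entropy of the multivariate generalized Gaussian distribution.**
Let `f^{GG}(x) = C⁻¹ exp(-(1/2)[(x-μ)^T Σ⁻¹ (x-μ)]^s)` with normalization constant
`C = C(m,s,Σ)`. Then for `q > 0`, `q ≠ 1`,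
`∫ (f^{GG})^q = q^{-m/(2s)} C^{1-q}` and
`H_q(f^{GG}) = (1/(1-q)) (q^{-m/(2s)} C^{1-q} - 1)`. -/
theorem tsallis_generalizedGaussian (m : ℕ) (hm : 1 ≤ m) (s : ℝ) (hs : 0 < s)
    (μ : Fin m → ℝ) (S : Matrix (Fin m) (Fin m) ℝ)
    (hsymm : S.IsSymm) (hpd : S.PosDef)
    (q : ℝ) (hq0 : 0 < q) (hq1 : q ≠ 1)
    (C : ℝ)
    (hC : C = ∫ x : Fin m → ℝ, Real.exp (-(1 / 2) * ((x - μ) ⬝ᵥ (S⁻¹ *ᵥ (x - μ))) ^ s)) :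
    (∫ x : Fin m → ℝ,
        (C⁻¹ * Real.exp (-(1 / 2) * ((x - μ) ⬝ᵥ (S⁻¹ *ᵥ (x - μ))) ^ s)) ^ q) =
      q ^ (-(m : ℝ) / (2 * s)) * C ^ (1 - q) ∧
    (1 / (1 - q)) *
        ((∫ x : Fin m → ℝ,
          (C⁻¹ * Real.exp (-(1 / 2) * ((x - μ) ⬝ᵥ (S⁻¹ *ᵥ (x - μ))) ^ s)) ^ q) - 1) =
      (1 / (1 - q)) * (q ^ (-(m : ℝ) / (2 * s)) * C ^ (1 - q) - 1) :=
  tsallis_generalizedGaussian_general m s hs μ S hpd q hq0 hq1 C hC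
end
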